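/- arXiv:2112.13674 — 3 statements merged into one kernel-verified Lean document; each statement's English description precedes it below -/
import Mathlib

section
/- Suppose v : [0,t] → (0,∞) is continuously differentiable and solves the backward ODE (d/ds) v(s) = e^{ξ(s)} ψ₀(v(s) e^{-ξ(s)}) on [0,t] with terminal condition v(t) = λ, where ξ : [0,t] → ℝ is a measurable bounded function and ψ₀(u) ≥ C u^{1+β} for all u ≥ 0, with C > 0, β ∈ (0,1]. Then v(0)^{-β} ≥ λ^{-β} + Cβ ∫₀^t e^{-β ξ(s)} ds, i.e. v(0) ≤ (λ^{-β} + Cβ ∫₀^t e^{-β ξ(s)} ds)^{-1/β}. -/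
open MeasureTheory Real Set intervalIntegral

theorem stmt4 (t lam C β : ℝ) (ht : 0 < t) (hlam : 0 < lam) (hC : 0 < C)
    (hβ : β ∈ Set.Ioc (0 : ℝ) 1)
    (ξ : ℝ → ℝ) (hξm : Measurable ξ) (hξb : ∃ M, ∀ s ∈ Set.Icc 0 t, |ξ s| ≤ M)
    (ψ₀ : ℝ → ℝ) (hψc : Continuous ψ₀) (hψpos : ∀ u : ℝ, 0 ≤ u → 0 ≤ ψ₀ u)
    (hψlb : ∀ u : ℝ, 0 ≤ u → C * u ^ ((1 : ℝ) + β) ≤ ψ₀ u)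
    (v : ℝ → ℝ) (hvpos : ∀ s ∈ Set.Icc 0 t, 0 < v s)
    (hvC1 : ContDiffOn ℝ 1 v (Set.Icc 0 t))
    (hode : ∀ s ∈ Set.Icc 0 t,
      HasDerivAt v (Real.exp (ξ s) * ψ₀ (v s * Real.exp (-ξ s))) s)
    (hterm : v t = lam) :
    lam ^ (-β) + C * β * ∫ s in (0 : ℝ)..t, Real.exp (-β * ξ s) ≤ (v 0) ^ (-β) ∧
    v 0 ≤ (lam ^ (-β) + C * β * ∫ s in (0 : ℝ)..t, Real.exp (-β * ξ s)) ^ (-(1 / β)) := by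
  obtain ⟨hβ0, hβ1⟩ := hβ
  obtain ⟨M, hM⟩ := hξb
  have ht0 : (0:ℝ) ∈ Set.Icc (0:ℝ) t := ⟨le_refl 0, ht.le⟩
  have htt : t ∈ Set.Icc (0:ℝ) t := ⟨ht.le, le_refl t⟩
  set f : ℝ → ℝ := fun s => Real.exp (ξ s) * ψ₀ (v s * Real.exp (-ξ s)) with hf
  have huniq : UniqueDiffOn ℝ (Set.Icc (0:ℝ) t) := uniqueDiffOn_Icc ht
  have hfd : ∀ s ∈ Set.Icc (0:ℝ) t, derivWithin v (Set.Icc 0 t) s = f s := fun s hs =>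
    ((hode s hs).hasDerivWithinAt).derivWithin (huniq s hs)
  have hfc : ContinuousOn f (Set.Icc 0 t) :=
    (hvC1.continuousOn_derivWithin huniq (le_refl 1)).congr fun s hs => (hfd s hs).symm
  set w' : ℝ → ℝ := fun s => f s * (-β) * (v s) ^ (-β - 1) with hw'
  have hwderiv : ∀ s ∈ Set.Icc (0:ℝ) t, HasDerivAt (fun s => (v s) ^ (-β)) (w' s) s :=
    fun s hs => (hode s hs).rpow_const (Or.inl (hvpos s hs).ne')
  have hw'c : ContinuousOn w' (Set.Icc 0 t) := by
    exact (hfc.mul continuousOn_const).mul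
      (hvC1.continuousOn.rpow_const fun s hs => Or.inl (hvpos s hs).ne')
  have hw'int : IntervalIntegrable w' volume 0 t := by
    apply ContinuousOn.intervalIntegrable
    rwa [Set.uIcc_of_le ht.le]
  -- integrability of exp(-β ξ)
  have hgm : Measurable fun s => Real.exp (-β * ξ s) :=
    Real.measurable_exp.comp (hξm.const_mul (-β))
  have hgint : IntervalIntegrable (fun s => Real.exp (-β * ξ s)) volume 0 t := by
    rw [intervalIntegrable_iff_integrableOn_Icc_of_le ht.le]
    apply MeasureTheory.Integrable.mono' (integrable_const (Real.exp (β * M)))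
      hgm.aestronglyMeasurable
    · filter_upwards [MeasureTheory.ae_restrict_mem measurableSet_Icc] with s hs
      rw [Real.norm_eq_abs, abs_of_pos (Real.exp_pos _), Real.exp_le_exp]
      have h1 : -β * ξ s ≤ β * |ξ s| := by
        rw [neg_mul]
        nlinarith [neg_abs_le (ξ s), abs_nonneg (ξ s)]
      have := hM s hs
      nlinarith
  -- pointwise inequality
  have hpt : ∀ s ∈ Set.Icc (0:ℝ) t, w' s ≤ -(C * β) * Real.exp (-β * ξ s) := by
    intro s hs
    have hv := hvpos s hs
    set u := v s * Real.exp (-ξ s) with hu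
    have hu0 : 0 < u := mul_pos hv (Real.exp_pos _)
    have hlb := hψlb u hu0.le
    have hK : 0 < β * Real.exp (ξ s) * (v s) ^ (-β - 1) :=
      mul_pos (mul_pos hβ0 (Real.exp_pos _)) (Real.rpow_pos_of_pos hv _)
    have key : β * Real.exp (ξ s) * (v s) ^ (-β - 1) * (C * u ^ ((1:ℝ) + β))
        = C * β * Real.exp (-β * ξ s) := by
      have hv1 : v s ^ (-β - 1) * v s ^ ((1:ℝ) + β) = 1 := by
        rw [← Real.rpow_add hv, show -β - 1 + ((1:ℝ) + β) = 0 by ring, Real.rpow_zero]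
      have he : Real.exp (ξ s) * Real.exp ((-ξ s) * (1 + β)) = Real.exp (-β * ξ s) := by
        rw [← Real.exp_add]; ring_nf
      calc β * Real.exp (ξ s) * v s ^ (-β - 1) * (C * u ^ ((1:ℝ) + β))
          = C * β * (v s ^ (-β - 1) * v s ^ ((1:ℝ) + β))
            * (Real.exp (ξ s) * Real.exp ((-ξ s) * (1 + β))) := by
            rw [hu, Real.mul_rpow hv.le (Real.exp_pos _).le, ← Real.exp_mul]; ring
        _ = C * β * Real.exp (-β * ξ s) := by rw [hv1, he]; ring
    have : w' s = -(β * Real.exp (ξ s) * (v s) ^ (-β - 1) * ψ₀ u) := by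
      simp only [hw', hf, hu]; ring
    rw [this]
    have h2 : β * Real.exp (ξ s) * (v s) ^ (-β - 1) * (C * u ^ ((1:ℝ) + β))
        ≤ β * Real.exp (ξ s) * (v s) ^ (-β - 1) * ψ₀ u :=
      mul_le_mul_of_nonneg_left hlb hK.le
    rw [key] at h2
    linarith
  -- FTC
  have hftc : (∫ s in (0:ℝ)..t, w' s) = (v t) ^ (-β) - (v 0) ^ (-β) := by
    apply intervalIntegral.integral_eq_sub_of_hasDerivAt
    · intro s hs
      rw [Set.uIcc_of_le ht.le] at hs
      exact hwderiv s hs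
    · exact hw'int
  have hmono : (∫ s in (0:ℝ)..t, w' s)
      ≤ ∫ s in (0:ℝ)..t, -(C * β) * Real.exp (-β * ξ s) :=
    intervalIntegral.integral_mono_on ht.le hw'int (hgint.const_mul _) hpt
  rw [hftc, intervalIntegral.integral_const_mul, hterm] at hmono
  have part1 : lam ^ (-β) + C * β * ∫ s in (0:ℝ)..t, Real.exp (-β * ξ s) ≤ (v 0) ^ (-β) := by
    linarith
  refine ⟨part1, ?_⟩
  have hInonneg : 0 ≤ ∫ s in (0:ℝ)..t, Real.exp (-β * ξ s) :=
    intervalIntegral.integral_nonneg ht.le fun s hs => (Real.exp_pos _).le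
  have hApos : 0 < lam ^ (-β) + C * β * ∫ s in (0:ℝ)..t, Real.exp (-β * ξ s) := by
    have h1 := Real.rpow_pos_of_pos hlam (-β)
    have h2 : 0 ≤ C * β * ∫ s in (0:ℝ)..t, Real.exp (-β * ξ s) :=
      mul_nonneg (mul_nonneg hC.le hβ0.le) hInonneg
    linarith
  have hv0 := hvpos 0 ht0
  have h3 := Real.rpow_le_rpow_of_nonpos hApos part1
    (neg_nonpos_of_nonneg (by positivity : (0:ℝ) ≤ 1/β))
  rw [← Real.rpow_mul hv0.le] at h3
  rw [show (-β) * (-(1/β)) = 1 by field_simp, Real.rpow_one] at h3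
  exact h3
end

section
/- With the same setup but for the limit λ → ∞: if for every λ > 0, v_λ denotes the solution with terminal condition λ, then v_λ(0) ≤ (Cβ ∫₀^t e^{-βξ(s)} ds)^{-1/β} for every λ; hence v(0,∞) := sup_λ v_λ(0) satisfies v(0,∞) ≤ (Cβ ∫₀^t e^{-βξ(s)} ds)^{-1/β}. -/
open MeasureTheory Real Set intervalIntegral

theorem stmt5 (t C β : ℝ) (ht : 0 < t) (hC : 0 < C) (hβ : β ∈ Set.Ioc (0 : ℝ) 1)
    (ξ : ℝ → ℝ) (hξm : Measurable ξ) (hξb : ∃ M, ∀ s ∈ Set.Icc 0 t, |ξ s| ≤ M)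
    (ψ₀ : ℝ → ℝ) (hψc : Continuous ψ₀) (hψpos : ∀ u : ℝ, 0 ≤ u → 0 ≤ ψ₀ u)
    (hψlb : ∀ u : ℝ, 0 ≤ u → C * u ^ ((1 : ℝ) + β) ≤ ψ₀ u)
    (v : ℝ → ℝ → ℝ)
    (hvpos : ∀ lam : ℝ, 0 < lam → ∀ s ∈ Set.Icc 0 t, 0 < v lam s)
    (hvC1 : ∀ lam : ℝ, 0 < lam → ContDiffOn ℝ 1 (v lam) (Set.Icc 0 t))
    (hode : ∀ lam : ℝ, 0 < lam → ∀ s ∈ Set.Icc 0 t,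
      HasDerivAt (v lam) (Real.exp (ξ s) * ψ₀ (v lam s * Real.exp (-ξ s))) s)
    (hterm : ∀ lam : ℝ, 0 < lam → v lam t = lam) :
    (∀ lam : ℝ, 0 < lam →
      v lam 0 ≤ (C * β * ∫ s in (0 : ℝ)..t, Real.exp (-β * ξ s)) ^ (-(1 / β))) ∧
    sSup {y : ℝ | ∃ lam : ℝ, 0 < lam ∧ y = v lam 0} ≤
      (C * β * ∫ s in (0 : ℝ)..t, Real.exp (-β * ξ s)) ^ (-(1 / β)) := by
  obtain ⟨hβ0, hβ1⟩ := hβ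
  obtain ⟨M, hM⟩ := hξb
  have hM0 : 0 ≤ M := le_trans (abs_nonneg _) (hM 0 ⟨le_refl 0, ht.le⟩)
  have hmeas : Measurable fun s => Real.exp (-β * ξ s) := (hξm.const_mul (-β)).exp
  have hInt : IntervalIntegrable (fun s => Real.exp (-β * ξ s)) volume 0 t := by
    rw [intervalIntegrable_iff_integrableOn_Ioc_of_le ht.le]
    apply Measure.integrableOn_of_bounded measure_Ioc_lt_top.ne hmeas.aestronglyMeasurable
      (M := Real.exp (β * M))
    filter_upwards [ae_restrict_mem measurableSet_Ioc] with s hs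
    have hsI : s ∈ Set.Icc 0 t := ⟨hs.1.le, hs.2⟩
    have h1 := abs_le.mp (hM s hsI)
    rw [Real.norm_eq_abs, abs_of_pos (Real.exp_pos _)]
    apply Real.exp_le_exp.mpr
    nlinarith
  set J : ℝ := ∫ s in (0:ℝ)..t, Real.exp (-β * ξ s) with hJdef
  have hJpos : 0 < J :=
    intervalIntegral.intervalIntegral_pos_of_pos_on hInt (fun x _ => Real.exp_pos _) ht
  have hCβJ : 0 < C * β * J := by positivity
  have key : ∀ lam : ℝ, 0 < lam → v lam 0 ≤ (C * β * J) ^ (-(1/β)) := by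
    intro lam hlam
    have hv := hvpos lam hlam
    have h0t : (0:ℝ) ∈ Set.Icc 0 t := ⟨le_refl 0, ht.le⟩
    have htt : t ∈ Set.Icc 0 t := ⟨ht.le, le_refl t⟩
    set D : ℝ → ℝ := fun s => Real.exp (ξ s) * ψ₀ (v lam s * Real.exp (-ξ s)) with hDdef
    have hDeq : Set.EqOn (derivWithin (v lam) (Set.Icc 0 t)) D (Set.Icc 0 t) := fun s hs =>
      ((hode lam hlam s hs).hasDerivWithinAt).derivWithin (uniqueDiffOn_Icc ht s hs)
    have hDcont : ContinuousOn D (Set.Icc 0 t) :=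
      (((hvC1 lam hlam).continuousOn_derivWithin (uniqueDiffOn_Icc ht) le_rfl).congr hDeq.symm)
    set w : ℝ → ℝ := fun s => v lam s ^ (-β) with hwdef
    set d : ℝ → ℝ := fun s => D s * (-β) * v lam s ^ (-β - 1) with hddef
    have hderiv : ∀ s ∈ Set.Icc 0 t, HasDerivAt w (d s) s := by
      intro s hs
      have h := (hode lam hlam s hs).rpow_const (p := -β) (Or.inl (hv s hs).ne')
      simpa [hddef, hDdef, sub_eq_add_neg] using h
    have hvcont : ContinuousOn (v lam) (Set.Icc 0 t) := (hvC1 lam hlam).continuousOn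
    have hdcont : ContinuousOn d (Set.Icc 0 t) :=
      (hDcont.mul continuousOn_const).mul
        (hvcont.rpow_const fun s hs => Or.inl (hv s hs).ne')
    have hdInt : IntervalIntegrable d volume 0 t := by
      apply ContinuousOn.intervalIntegrable
      rwa [Set.uIcc_of_le ht.le]
    have hFTC : ∫ s in (0:ℝ)..t, d s = w t - w 0 :=
      intervalIntegral.integral_eq_sub_of_hasDerivAt
        (fun s hs => hderiv s (by rwa [Set.uIcc_of_le ht.le] at hs)) hdInt
    have hptwise : ∀ s ∈ Set.Icc 0 t, d s ≤ -(C * β * Real.exp (-β * ξ s)) := by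
      intro s hs
      have ha0 : 0 < v lam s := hv s hs
      set a := v lam s with hadef
      have hD_lb : Real.exp (ξ s) * (C * (a * Real.exp (-ξ s)) ^ ((1:ℝ) + β)) ≤ D s :=
        mul_le_mul_of_nonneg_left (hψlb _ (by positivity)) (Real.exp_pos _).le
      have hexpand : (a * Real.exp (-ξ s)) ^ ((1:ℝ)+β)
          = a ^ ((1:ℝ)+β) * Real.exp (-ξ s * (1+β)) := by
        rw [Real.mul_rpow ha0.le (Real.exp_pos _).le, ← Real.exp_mul]
      have hcneg : -(β * a ^ (-β - 1)) ≤ 0 := by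
        have := Real.rpow_pos_of_pos ha0 (-β - 1)
        nlinarith
      have h2 : (-(β * a ^ (-β-1))) * D s
          ≤ (-(β * a ^ (-β-1))) * (Real.exp (ξ s) * (C * (a * Real.exp (-ξ s)) ^ ((1:ℝ)+β))) :=
        mul_le_mul_of_nonpos_left hD_lb hcneg
      have hA : a ^ (-β-1) * a ^ ((1:ℝ)+β) = 1 := by
        have he : (-β - 1) + (1 + β) = 0 := by ring
        rw [← Real.rpow_add ha0, he, Real.rpow_zero]
      have hE : Real.exp (ξ s) * Real.exp (-ξ s * (1+β)) = Real.exp (-β * ξ s) := by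
        rw [← Real.exp_add]; congr 1; ring
      have h3 : (-(β * a ^ (-β-1))) * (Real.exp (ξ s) * (C * (a * Real.exp (-ξ s)) ^ ((1:ℝ)+β)))
          = -(C * β * Real.exp (-β * ξ s)) := by
        rw [hexpand]
        calc (-(β * a ^ (-β-1))) * (Real.exp (ξ s) * (C * (a ^ ((1:ℝ)+β) * Real.exp (-ξ s * (1+β)))))
            = -(C * β) * ((a ^ (-β-1) * a ^ ((1:ℝ)+β)) * (Real.exp (ξ s) * Real.exp (-ξ s * (1+β)))) := by
              ring
          _ = -(C * β) * (1 * Real.exp (-β * ξ s)) := by rw [hA, hE]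
          _ = -(C * β * Real.exp (-β * ξ s)) := by ring
      calc d s = (-(β * a ^ (-β-1))) * D s := by rw [hddef]; ring
        _ ≤ _ := h2
        _ = -(C * β * Real.exp (-β * ξ s)) := h3
    have hRInt : IntervalIntegrable (fun s => -(C * β * Real.exp (-β * ξ s))) volume 0 t :=
      (hInt.const_mul (C * β)).neg
    have hint_le : ∫ s in (0:ℝ)..t, d s ≤ ∫ s in (0:ℝ)..t, -(C * β * Real.exp (-β * ξ s)) :=
      intervalIntegral.integral_mono_on ht.le hdInt hRInt hptwise
    have hRval : ∫ s in (0:ℝ)..t, -(C * β * Real.exp (-β * ξ s)) = -(C * β * J) := by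
      rw [intervalIntegral.integral_neg, intervalIntegral.integral_const_mul]
    have hwt : 0 < w t := Real.rpow_pos_of_pos (hv t htt) _
    have hw0 : C * β * J ≤ w 0 := by
      rw [hFTC, hRval] at hint_le
      linarith
    have hv0 : 0 < v lam 0 := hv 0 h0t
    have hid : v lam 0 = (v lam 0 ^ (-β)) ^ (-(1/β)) := by
      rw [← Real.rpow_mul hv0.le]
      have hone : (-β) * (-(1/β)) = 1 := by field_simp
      rw [hone, Real.rpow_one]
    calc v lam 0 = (w 0) ^ (-(1/β)) := hid
      _ ≤ (C * β * J) ^ (-(1/β)) := by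
          apply Real.rpow_le_rpow_of_nonpos hCβJ hw0
          exact neg_nonpos.mpr (by positivity)
  refine ⟨key, ?_⟩
  refine csSup_le ⟨v 1 0, 1, one_pos, rfl⟩ ?_
  rintro y ⟨lam, hlam, rfl⟩
  exact key lam hlam
end

section
/- In the stable case ψ₀(λ) = Cλ^{1+β}, ψ₀'(λ) = C(1+β)λ^{β}, and for v(s) = (λ^{−β} + Cβ I(s))^{−1/β} with I(s) = ∫_s^0 e^{−βΞ(u)} du and h(s) = e^{−Ξ(s)} v(s): exp(−∫_{−t}^0 ψ₀'(h(s)) ds) = (1 + λ^{β} Cβ ∫_{−t}^0 e^{−βΞ(u)} du)^{−(1+β)/β}. -/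
open MeasureTheory Real Set intervalIntegral

theorem stmt14 (C β lam t : ℝ) (hC : 0 < C) (hβ : β ∈ Set.Ioo (0 : ℝ) 1)
    (hlam : 0 < lam) (ht : 0 < t)
    (Ξ : ℝ → ℝ) (hΞ : Continuous Ξ)
    (ψ₀ ψ₀' : ℝ → ℝ)
    (hψ : ∀ u : ℝ, 0 ≤ u → ψ₀ u = C * u ^ ((1 : ℝ) + β))
    (hψ' : ∀ u : ℝ, 0 ≤ u → ψ₀' u = C * (1 + β) * u ^ β)
    (I : ℝ → ℝ) (hI : ∀ s : ℝ, I s = ∫ u in s..(0 : ℝ), Real.exp (-β * Ξ u))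
    (v : ℝ → ℝ) (hv : ∀ s : ℝ, v s = (lam ^ (-β) + C * β * I s) ^ (-(1 / β)))
    (h : ℝ → ℝ) (hh : ∀ s : ℝ, h s = Real.exp (-Ξ s) * v s) :
    (∫ s in (-t)..(0 : ℝ), ψ₀' (h s)) =
      ((1 + β) / β) * Real.log (1 + lam ^ β * (C * β) * I (-t)) ∧
    Real.exp (-∫ s in (-t)..(0 : ℝ), ψ₀' (h s)) =
      (1 + lam ^ β * (C * β) * I (-t)) ^ (-((1 + β) / β)) := by
  obtain ⟨hβ0, hβ1⟩ := hβ
  have hβne : β ≠ 0 := hβ0.ne'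
  set f : ℝ → ℝ := fun u => Real.exp (-β * Ξ u) with hf
  have hfc : Continuous f := Real.continuous_exp.comp (continuous_const.mul hΞ)
  set E : ℝ → ℝ := fun s => lam ^ (-β) + C * β * I s with hEdef
  -- derivative of I
  have hIfun : I = fun s => -∫ x in (0:ℝ)..s, f x := by
    funext s
    rw [hI, intervalIntegral.integral_symm]
  have hIderiv : ∀ s : ℝ, HasDerivAt I (-(f s)) s := by
    intro s
    rw [hIfun]
    exact (intervalIntegral.integral_hasDerivAt_right (hfc.intervalIntegrable _ _)
      (hfc.stronglyMeasurableAtFilter _ _) hfc.continuousAt).neg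
  have hEderiv : ∀ s : ℝ, HasDerivAt E (C * β * -(f s)) s := fun s =>
    ((hIderiv s).const_mul (C * β)).const_add _
  have hEcont : Continuous E := by
    rw [continuous_iff_continuousAt]; exact fun s => (hEderiv s).continuousAt
  have huIcc : Set.uIcc (-t) (0:ℝ) = Set.Icc (-t) 0 :=
    Set.uIcc_of_le (by linarith)
  have hInn : ∀ s ∈ Set.uIcc (-t) (0:ℝ), 0 ≤ I s := by
    intro s hs
    rw [huIcc] at hs
    rw [hI]
    exact intervalIntegral.integral_nonneg hs.2 (fun u _ => (Real.exp_pos _).le)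
  have hEpos : ∀ s ∈ Set.uIcc (-t) (0:ℝ), 0 < E s := by
    intro s hs
    exact add_pos_of_pos_of_nonneg (Real.rpow_pos_of_pos hlam _)
      (mul_nonneg (mul_nonneg hC.le hβ0.le) (hInn s hs))
  set g : ℝ → ℝ := fun s => C * (1 + β) * f s * (E s)⁻¹ with hgdef
  set F : ℝ → ℝ := fun s => -((1 + β) / β) * Real.log (E s) with hFdef
  have hFderiv : ∀ s ∈ Set.uIcc (-t) (0:ℝ), HasDerivAt F (g s) s := by
    intro s hs
    have hlog : HasDerivAt (fun x => Real.log (E x)) ((E s)⁻¹ * (C * β * -(f s))) s :=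
      (Real.hasDerivAt_log (hEpos s hs).ne').comp s (hEderiv s)
    have h2 := hlog.const_mul (-((1 + β) / β))
    refine h2.congr_deriv ?_
    rw [show -((1 + β) / β) * ((E s)⁻¹ * (C * β * -(f s)))
        = (1 + β) / β * β * (C * f s * (E s)⁻¹) from by ring,
      div_mul_cancel₀ _ hβne]
    ring
  -- pointwise equality on the interval
  have hcongr : Set.EqOn (fun s => ψ₀' (h s)) g (Set.uIcc (-t) (0:ℝ)) := by
    intro s hs
    have hEp := hEpos s hs
    have hvpos : 0 < v s := by
      rw [hv]; exact Real.rpow_pos_of_pos hEp _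
    have hhs : 0 ≤ h s := by
      rw [hh]; exact mul_nonneg (Real.exp_pos _).le hvpos.le
    show ψ₀' (h s) = g s
    rw [hψ' _ hhs, hh, hv]
    have h1 : (Real.exp (-Ξ s) * (E s) ^ (-(1/β))) ^ β = f s * (E s)⁻¹ := by
      rw [Real.mul_rpow (Real.exp_pos _).le (Real.rpow_nonneg hEp.le _),
        Real.rpow_def_of_pos (Real.exp_pos _), Real.log_exp,
        ← Real.rpow_mul hEp.le, show -(1/β) * β = -1 from by field_simp,
        Real.rpow_neg_one]
      congr 1
      show Real.exp (-Ξ s * β) = Real.exp (-β * Ξ s)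
      congr 1
      ring
    rw [show lam ^ (-β) + C * β * I s = E s from rfl, h1]
    ring
  have hgcont : ContinuousOn g (Set.uIcc (-t) (0:ℝ)) :=
    ((continuous_const.mul hfc).continuousOn).mul
      (hEcont.continuousOn.inv₀ fun s hs => (hEpos s hs).ne')
  have hint : IntervalIntegrable g volume (-t) 0 :=
    hgcont.intervalIntegrable
  have hftc : (∫ s in (-t)..(0:ℝ), g s) = F 0 - F (-t) :=
    intervalIntegral.integral_eq_sub_of_hasDerivAt hFderiv hint
  have hIzero : I 0 = 0 := by rw [hI]; exact intervalIntegral.integral_same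
  have hItn : 0 ≤ I (-t) := hInn (-t) (by rw [huIcc]; exact ⟨le_refl _, by linarith⟩)
  have hEt : 0 < E (-t) := hEpos (-t) (by rw [huIcc]; exact ⟨le_refl _, by linarith⟩)
  have hlamβ : (0:ℝ) < lam ^ β := Real.rpow_pos_of_pos hlam _
  have hlamnβ : lam ^ (-β) = (lam ^ β)⁻¹ := Real.rpow_neg hlam.le _
  have hA : 1 + lam ^ β * (C * β) * I (-t) = E (-t) * lam ^ β := by
    show _ = (lam ^ (-β) + C * β * I (-t)) * lam ^ β
    rw [hlamnβ]
    field_simp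
  have hApos : 0 < 1 + lam ^ β * (C * β) * I (-t) := by
    rw [hA]; exact mul_pos hEt hlamβ
  have hmain : (∫ s in (-t)..(0:ℝ), ψ₀' (h s))
      = ((1 + β) / β) * Real.log (1 + lam ^ β * (C * β) * I (-t)) := by
    rw [intervalIntegral.integral_congr hcongr, hftc]
    show -((1 + β) / β) * Real.log (E 0) - -((1 + β) / β) * Real.log (E (-t)) = _
    rw [hA, Real.log_mul hEt.ne' hlamβ.ne']
    have hE0 : E 0 = lam ^ (-β) := by show lam ^ (-β) + C * β * I 0 = _; rw [hIzero]; ring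
    rw [hE0, hlamnβ, Real.log_inv]
    ring
  refine ⟨hmain, ?_⟩
  rw [hmain, Real.rpow_def_of_pos hApos, ← neg_mul, mul_comm]
end
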